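/- arXiv:1110.0990 — 4 statements merged into one kernel-verified Lean document; each statement's English description precedes it below -/
import Mathlib

section
/- If G is a connected finite simple graph with minimum degree at least 2 and e(G) ≤ v(G) + d, then the number of edges of G having at least one endpoint of degree at least 3 is at most 6d. -/
/-- If `G` is connected with minimum degree at least 2 and `e(G) ≤ v(G) + d`,
then the number of edges with an endpoint of degree at least 3 is at most `6d`. -/
theorem stmt2 {V : Type*} [Fintype V] [DecidableEq V] (G : SimpleGraph V)
    [DecidableRel G.Adj] (hconn : G.Connected)
    (hdeg : ∀ v, 2 ≤ G.degree v) (d : ℕ)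
    (hsparse : G.edgeFinset.card ≤ Fintype.card V + d) :
    {e ∈ G.edgeSet | ∃ v ∈ e, 3 ≤ G.degree v}.ncard ≤ 6 * d := by
  classical
  set S : Finset V := Finset.univ.filter (fun v => 3 ≤ G.degree v) with hS
  set E' : Finset (Sym2 V) :=
    G.edgeFinset.filter (fun e => ∃ v ∈ e, 3 ≤ G.degree v) with hE
  have hset : {e ∈ G.edgeSet | ∃ v ∈ e, 3 ≤ G.degree v} = ↑E' := by
    ext e
    simp [hE, Set.mem_setOf_eq, SimpleGraph.mem_edgeFinset]
  rw [hset, Set.ncard_coe_finset]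
  have hsub : E' ⊆ S.biUnion (fun v => G.incidenceFinset v) := by
    intro e he
    simp only [hE, Finset.mem_filter, SimpleGraph.mem_edgeFinset] at he
    obtain ⟨he1, v, hv, hv3⟩ := he
    refine Finset.mem_biUnion.2 ⟨v, ?_, ?_⟩
    · simp [hS, hv3]
    · rw [SimpleGraph.mem_incidenceFinset]
      exact ⟨he1, hv⟩
  have h1 : E'.card ≤ ∑ v ∈ S, G.degree v := by
    calc E'.card ≤ (S.biUnion (fun v => G.incidenceFinset v)).card :=
          Finset.card_le_card hsub
      _ ≤ ∑ v ∈ S, (G.incidenceFinset v).card := Finset.card_biUnion_le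
      _ = ∑ v ∈ S, G.degree v := by
          refine Finset.sum_congr rfl fun v _ => ?_
          exact G.card_incidenceFinset_eq_degree v
  have hsum : ∑ v, G.degree v ≤ 2 * Fintype.card V + 2 * d := by
    rw [SimpleGraph.sum_degrees_eq_twice_card_edges]
    omega
  have hsplit : ∑ v, (G.degree v - 2) + 2 * Fintype.card V = ∑ v, G.degree v := by
    have h2 : ∑ v, ((G.degree v - 2) + 2) = ∑ v, G.degree v :=
      Finset.sum_congr rfl fun v _ => Nat.sub_add_cancel (hdeg v)
    rw [Finset.sum_add_distrib, Finset.sum_const, Finset.card_univ,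
      smul_eq_mul] at h2
    omega
  have hdef : ∑ v, (G.degree v - 2) ≤ 2 * d := by omega
  have hsubS : ∑ v ∈ S, (G.degree v - 2) ≤ 2 * d :=
    le_trans (Finset.sum_le_sum_of_subset (Finset.subset_univ S)) hdef
  have h3 : ∑ v ∈ S, G.degree v ≤ 3 * ∑ v ∈ S, (G.degree v - 2) := by
    rw [Finset.mul_sum]
    refine Finset.sum_le_sum fun v hv => ?_
    have : 3 ≤ G.degree v := (Finset.mem_filter.1 hv).2
    omega
  omega
end

section
/- Let G be a connected graph with e(G) ≤ v(G) + d, and let e = (u,v) be an edge of G. Then every connected component of the graph obtained from G by deleting both endpoints u and v (and all incident edges) satisfies e(C) ≤ v(C) + d. -/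
open SimpleGraph Finset

private lemma cross_lemma {V : Type*} (G : SimpleGraph V) (S : Set V) :
    ∀ {a b : V}, G.Walk a b → a ∈ S → b ∉ S →
      ∃ x y, x ∈ S ∧ y ∉ S ∧ G.Adj x y := by
  intro a b w
  induction w with
  | nil => intro ha hb; exact absurd ha hb
  | @cons u v w h p ih =>
    intro ha hb
    by_cases hm : v ∈ S
    · exact ih hm hb
    · exact ⟨u, v, ha, hm, h⟩

open Classical in
private lemma key_lemma {V : Type*} [Fintype V] [DecidableEq V] (G : SimpleGraph V)
    [DecidableRel G.Adj] (hconn : G.Preconnected) :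
    ∀ (n : ℕ) (S : Finset V), S.card = n → S ≠ Finset.univ →
      n ≤ (G.edgeFinset.filter (fun f => ∃ x ∈ f, x ∈ S)).card := by
  intro n
  induction n with
  | zero => intro S _ _; exact Nat.zero_le _
  | succ n ih =>
    intro S hcard hne
    have hSne : S.Nonempty := by rw [← Finset.card_pos, hcard]; omega
    obtain ⟨s, hs⟩ := hSne
    obtain ⟨t, ht⟩ : ∃ t, t ∉ S := by
      by_contra h; push_neg at h; exact hne (Finset.eq_univ_iff_forall.2 h)
    obtain ⟨x, y, hx, hy, hadj⟩ :=
      cross_lemma G (↑S : Set V) (hconn s t).some hs ht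
    have h1 : (S.erase x).card = n := by
      rw [Finset.card_erase_of_mem hx, hcard]; rfl
    have hne' : S.erase x ≠ Finset.univ := by
      intro hu
      exact ht (Finset.mem_of_mem_erase (hu ▸ Finset.mem_univ t))
    have hnot : s(x, y) ∉ G.edgeFinset.filter (fun f => ∃ z ∈ f, z ∈ S.erase x) := by
      simp only [Finset.mem_filter, Sym2.mem_iff, not_and, not_exists]
      intro _ z hz
      rcases hz with rfl | rfl
      · exact Finset.notMem_erase z S
      · intro hmem; exact hy (Finset.mem_of_mem_erase hmem)
    have hsub : insert s(x, y) (G.edgeFinset.filter (fun f => ∃ z ∈ f, z ∈ S.erase x))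
        ⊆ G.edgeFinset.filter (fun f => ∃ z ∈ f, z ∈ S) := by
      intro f hf
      rcases Finset.mem_insert.1 hf with rfl | hf
      · exact Finset.mem_filter.2 ⟨mem_edgeFinset.2 hadj, x, Sym2.mem_mk_left x y, hx⟩
      · obtain ⟨hfe, z, hz, hzS⟩ := Finset.mem_filter.1 hf
        exact Finset.mem_filter.2 ⟨hfe, z, hz, Finset.mem_of_mem_erase hzS⟩
    calc n + 1 ≤ (insert s(x, y)
          (G.edgeFinset.filter (fun f => ∃ z ∈ f, z ∈ S.erase x))).card := by
          rw [Finset.card_insert_of_notMem hnot]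
          exact Nat.add_le_add_right (ih _ h1 hne') 1
      _ ≤ _ := Finset.card_le_card hsub

/-- If `G` is connected with `e(G) ≤ v(G) + d` and `e` is an edge of `G`, then every
connected component `C` of the graph obtained by deleting both endpoints of `e`
(and all incident edges) satisfies `e(C) ≤ v(C) + d`. -/
theorem stmt6 {V : Type*} [Fintype V] [DecidableEq V] (G : SimpleGraph V)
    [DecidableRel G.Adj] (hconn : G.Connected) (d : ℕ)
    (hsparse : G.edgeFinset.card ≤ Fintype.card V + d)
    (e : Sym2 V) (he : e ∈ G.edgeSet) :
    ∀ c : (SimpleGraph.induce {w | w ∉ e} G).ConnectedComponent,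
      {f ∈ (SimpleGraph.induce {w | w ∉ e} G).edgeSet | ∀ v ∈ f, v ∈ c.supp}.ncard
        ≤ c.supp.ncard + d := by
  classical
  set GI := SimpleGraph.induce {w | w ∉ e} G with hGI
  intro c
  set A : Finset V := (Set.toFinset c.supp).image Subtype.val with hA
  have hAmem : ∀ v : V, v ∈ A ↔ ∃ (h : v ∉ e), (⟨v, h⟩ : {w | w ∉ e}) ∈ c.supp := by
    intro v
    simp only [hA, Finset.mem_image, Set.mem_toFinset]
    constructor
    · rintro ⟨⟨w, hw⟩, hmem, rfl⟩; exact ⟨hw, hmem⟩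
    · rintro ⟨h, hmem⟩; exact ⟨⟨v, h⟩, hmem, rfl⟩
  have hinj : Function.Injective (Sym2.map (Subtype.val : {w | w ∉ e} → V)) :=
    Sym2.map.injective Subtype.val_injective
  -- the image of the target edge set is the Finset of edges of G inside A
  have himg : Sym2.map Subtype.val '' {f ∈ GI.edgeSet | ∀ v ∈ f, v ∈ c.supp}
      = ↑(G.edgeFinset.filter (fun f => ∀ v ∈ f, v ∈ A)) := by
    ext f
    constructor
    · rintro ⟨f', ⟨hf'e, hf's⟩, rfl⟩
      induction f' with
      | _ a b =>
        simp only [Finset.coe_filter, Set.mem_setOf_eq, mem_edgeFinset]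
        have hadj : G.Adj ↑a ↑b := by
          have := GI.mem_edgeSet.1 hf'e
          exact this
        refine ⟨G.mem_edgeSet.2 hadj, ?_⟩
        intro v hv
        rw [Sym2.map_pair_eq, Sym2.mem_iff] at hv
        rcases hv with rfl | rfl
        · exact (hAmem _).2 ⟨a.2, by simpa using hf's a (Sym2.mem_mk_left a b)⟩
        · exact (hAmem _).2 ⟨b.2, by simpa using hf's b (Sym2.mem_mk_right a b)⟩
    · intro hf
      simp only [Finset.coe_filter, Set.mem_setOf_eq, mem_edgeFinset] at hf
      obtain ⟨hfe, hfs⟩ := hf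
      induction f with
      | _ a b =>
        have hadj : G.Adj a b := G.mem_edgeSet.1 hfe
        obtain ⟨ha, hac⟩ := (hAmem a).1 (hfs a (Sym2.mem_mk_left a b))
        obtain ⟨hb, hbc⟩ := (hAmem b).1 (hfs b (Sym2.mem_mk_right a b))
        refine ⟨s(⟨a, ha⟩, ⟨b, hb⟩), ⟨?_, ?_⟩, by simp⟩
        · exact GI.mem_edgeSet.2 hadj
        · intro v hv
          rw [Sym2.mem_iff] at hv
          rcases hv with rfl | rfl
          · exact hac
          · exact hbc
  have hT : {f ∈ GI.edgeSet | ∀ v ∈ f, v ∈ c.supp}.ncard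
      = (G.edgeFinset.filter (fun f => ∀ v ∈ f, v ∈ A)).card := by
    rw [← Set.ncard_coe_finset, ← himg, Set.ncard_image_of_injective _ hinj]
  have hsupp : c.supp.ncard = A.card := by
    rw [Set.ncard_eq_toFinset_card', hA,
      Finset.card_image_of_injective _ Subtype.val_injective]
  -- A is nonempty
  have hAne : A.Nonempty := by
    obtain ⟨⟨v, hv⟩, hvc⟩ := c.exists_rep
    exact ⟨v, (hAmem v).2 ⟨hv, by rw [SimpleGraph.ConnectedComponent.mem_supp_iff]; exact hvc⟩⟩
  have hcompl_ne : Aᶜ ≠ Finset.univ := by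
    intro h
    obtain ⟨a, ha⟩ := hAne
    have : a ∈ Aᶜ := h ▸ Finset.mem_univ a
    exact (Finset.mem_compl.1 this) ha
  have hkey : Aᶜ.card ≤ (G.edgeFinset.filter (fun f => ∃ x ∈ f, x ∈ Aᶜ)).card := by
    have := key_lemma G hconn.preconnected Aᶜ.card Aᶜ rfl hcompl_ne
    convert this using 2
  have hpart : (G.edgeFinset.filter (fun f => ∀ v ∈ f, v ∈ A)).card
      + (G.edgeFinset.filter (fun f => ∃ x ∈ f, x ∈ Aᶜ)).card = G.edgeFinset.card := by
    have := Finset.card_filter_add_card_filter_not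
      (s := G.edgeFinset) (p := fun f => ∀ v ∈ f, v ∈ A)
    rw [← this]
    congr 1
    refine congrArg Finset.card (Finset.filter_congr ?_)
    intro f _
    simp only [eq_iff_iff, Finset.mem_compl, not_forall, exists_prop]
  have hAle : A.card ≤ Fintype.card V := Finset.card_le_univ A
  have hAc : Aᶜ.card = Fintype.card V - A.card := by
    rw [Finset.card_compl]
  rw [hT, hsupp]
  omega
end

section
/- Let g : X^d → ℝ be a measurable self-bounding function and X_1, …, X_d independent random variables with values in X. Then Z = g(X_1,…,X_d) satisfies Var(Z) ≤ E[Z]. -/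
/-!
By the Efron–Stein inequality, `Var g(X) ≤ ∑ᵢ E[Varᵢ g(X)]`, where `Varᵢ` is the variance in the
`i`-th coordinate with the others frozen. Since `g' i x` does not depend on `x i` and
`g - g' i ∈ [0, 1]`, the bound `Var Y ≤ (b - E Y) (E Y - a)` for `Y ∈ [a, b]` gives
`Varᵢ g ≤ Eᵢ g - g' i`; summing over `i` and using `∑ᵢ (g - g' i) ≤ g` leaves `E g`.

Efron–Stein is proved by induction on `d`: the law of total variance splits off the first
coordinate, and the remaining term is handled by the induction hypothesis together with the fact
that the variance of an average is at most the average of the variances. Changing one coordinate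
moves a self-bounding function by at most `1`, so `g` is bounded and all moments exist.
-/

open MeasureTheory ProbabilityTheory

lemma abs_sq_le_sq_of_abs_le {x C : ℝ} (h : |x| ≤ C) : |x ^ 2| ≤ C ^ 2 :=
  (abs_pow x 2).trans_le (pow_le_pow_left₀ (abs_nonneg x) h 2)

section Bounded

variable {β : Type*} [MeasurableSpace β] {μ : Measure β} {f : β → ℝ} {C : ℝ}

lemma integrable_of_abs_le [IsFiniteMeasure μ] (hf : Measurable f) (hC : ∀ x, |f x| ≤ C) :
    Integrable f μ :=
  .of_bound hf.aestronglyMeasurable C (ae_of_all _ hC)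

lemma memLp_of_abs_le [IsFiniteMeasure μ] (p : ENNReal) (hf : Measurable f)
    (hC : ∀ x, |f x| ≤ C) : MemLp f p μ :=
  .of_bound hf.aestronglyMeasurable C (ae_of_all _ hC)

lemma abs_integral_le_of_abs_le [IsProbabilityMeasure μ] (hC : ∀ x, |f x| ≤ C) :
    |∫ x, f x ∂μ| ≤ C := by
  simpa using norm_integral_le_of_norm_le_const (μ := μ) (f := f) (ae_of_all _ hC)

lemma variance_eq_integral_sq_sub_sq [IsProbabilityMeasure μ] (hf : Measurable f)
    (hC : ∀ x, |f x| ≤ C) : Var[f; μ] = ∫ x, f x ^ 2 ∂μ - (∫ x, f x ∂μ) ^ 2 :=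
  variance_eq_sub (memLp_of_abs_le 2 hf hC)

lemma sq_integral_le_integral_sq [IsProbabilityMeasure μ] (hf : Measurable f)
    (hC : ∀ x, |f x| ≤ C) : (∫ x, f x ∂μ) ^ 2 ≤ ∫ x, f x ^ 2 ∂μ := by
  linarith [variance_nonneg f μ, variance_eq_integral_sq_sub_sq (μ := μ) hf hC]

lemma abs_variance_le_of_abs_le [IsProbabilityMeasure μ] (hf : Measurable f)
    (hC : ∀ x, |f x| ≤ C) : |Var[f; μ]| ≤ C ^ 2 := by
  have := variance_le_sq_of_bounded (μ := μ) (a := -C) (b := C)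
    (ae_of_all _ fun x => abs_le.mp (hC x)) hf.aemeasurable
  rw [abs_of_nonneg (variance_nonneg _ _)]
  linarith

end Bounded

section Prod

variable {β γ : Type*} [MeasurableSpace β] [MeasurableSpace γ] {μ : Measure β} {ν : Measure γ}
  {F : β × γ → ℝ} {C : ℝ}

lemma Measurable.integral_prod_left' [SFinite μ] (hF : Measurable F) :
    Measurable fun y => ∫ x, F (x, y) ∂μ :=
  hF.stronglyMeasurable.integral_prod_left'.measurable

lemma Measurable.integral_prod_right' [SFinite ν] (hF : Measurable F) :
    Measurable fun x => ∫ y, F (x, y) ∂ν :=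
  hF.stronglyMeasurable.integral_prod_right'.measurable

lemma measurable_variance_prod_left [SFinite μ] (hF : Measurable F) :
    Measurable fun y => Var[fun x => F (x, y); μ] := by
  have hm : Measurable fun p : β × γ => (F p - ∫ x, F (x, p.2) ∂μ) ^ 2 :=
    (hF.sub (hF.integral_prod_left'.comp measurable_snd)).pow_const 2
  convert hm.integral_prod_left' (μ := μ) using 2 with y
  exact variance_eq_integral (hF.comp measurable_prodMk_right).aemeasurable

variable [IsProbabilityMeasure μ] [IsProbabilityMeasure ν]

lemma variance_prod_eq_integral_variance_add_variance_integral (hF : Measurable F)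
    (hC : ∀ p, |F p| ≤ C) :
    Var[F; μ.prod ν] =
      ∫ y, Var[fun x => F (x, y); μ] ∂ν + Var[fun y => ∫ x, F (x, y) ∂μ; ν] := by
  have hF2 : Measurable fun p => F p ^ 2 := hF.pow_const 2
  have hF2C : ∀ p, |F p ^ 2| ≤ C ^ 2 := fun p => abs_sq_le_sq_of_abs_le (hC p)
  have hmean : Measurable fun y => ∫ x, F (x, y) ∂μ := hF.integral_prod_left'
  have hmeanC : ∀ y, |∫ x, F (x, y) ∂μ| ≤ C := fun y => abs_integral_le_of_abs_le fun x => hC _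
  have hsec : ∀ y, Measurable fun x => F (x, y) := fun y => hF.comp measurable_prodMk_right
  rw [variance_eq_integral_sq_sub_sq hF hC, variance_eq_integral_sq_sub_sq hmean hmeanC,
    integral_prod_symm _ (integrable_of_abs_le hF hC),
    integral_prod_symm _ (integrable_of_abs_le hF2 hF2C)]
  simp_rw [variance_eq_integral_sq_sub_sq (hsec _) fun x => hC _]
  rw [integral_sub (integrable_of_abs_le hF2.integral_prod_left' fun y =>
      abs_integral_le_of_abs_le fun x => hF2C _)
    (integrable_of_abs_le (hmean.pow_const 2) fun y => abs_sq_le_sq_of_abs_le (hmeanC y))]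
  ring

lemma variance_integral_prod_le_integral_variance (hF : Measurable F) (hC : ∀ p, |F p| ≤ C) :
    Var[fun y => ∫ x, F (x, y) ∂μ; ν] ≤ ∫ x, Var[fun y => F (x, y); ν] ∂μ := by
  set b := fun x => ∫ y, F (x, y) ∂ν
  have hb : Measurable b := hF.integral_prod_right'
  have hbC : ∀ x, |b x| ≤ C := fun x => abs_integral_le_of_abs_le fun y => hC _
  have hD : Measurable fun p : β × γ => F p - b p.1 := hF.sub (hb.comp measurable_fst)
  have hDC : ∀ p : β × γ, |F p - b p.1| ≤ 2 * C := fun p =>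
    (abs_sub _ _).trans (by linarith [hC p, hbC p.1])
  have hD2 : Integrable (fun p : β × γ => (F p - b p.1) ^ 2) (μ.prod ν) :=
    integrable_of_abs_le (hD.pow_const 2) fun p => abs_sq_le_sq_of_abs_le (hDC p)
  have hcentered : ∀ y, ∫ x, F (x, y) ∂μ - ∫ y, ∫ x, F (x, y) ∂μ ∂ν
      = ∫ x, (F (x, y) - b x) ∂μ := fun y => by
    rw [integral_sub (integrable_of_abs_le (f := fun x => F (x, y))
      (hF.comp measurable_prodMk_right) fun x => hC _) (integrable_of_abs_le hb hbC),
      ← integral_integral_swap (f := fun x y => F (x, y)) (integrable_of_abs_le hF hC)]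
  -- Centre each section `F (x, ·)` at its mean `b x`, then apply Jensen to `(·) ^ 2` in `x`.
  calc Var[fun y => ∫ x, F (x, y) ∂μ; ν]
      = ∫ y, (∫ x, (F (x, y) - b x) ∂μ) ^ 2 ∂ν := by
        rw [variance_eq_integral hF.integral_prod_left'.aemeasurable]
        simp_rw [hcentered]
    _ ≤ ∫ y, ∫ x, (F (x, y) - b x) ^ 2 ∂μ ∂ν := by
        refine integral_mono ?_ hD2.integral_prod_right ?_
        · exact integrable_of_abs_le (hD.integral_prod_left'.pow_const 2) fun y =>
            abs_sq_le_sq_of_abs_le (abs_integral_le_of_abs_le fun x => hDC _)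
        · exact fun y => sq_integral_le_integral_sq (hD.comp measurable_prodMk_right) fun x => hDC _
    _ = ∫ x, ∫ y, (F (x, y) - b x) ^ 2 ∂ν ∂μ := (integral_integral_swap hD2).symm
    _ = ∫ x, Var[fun y => F (x, y); ν] ∂μ := by
        congr with x
        exact (variance_eq_integral (hF.comp measurable_prodMk_left).aemeasurable).symm

end Prod

section Pi

variable {α : Type*} [MeasurableSpace α] {n : ℕ} {C : ℝ}

@[fun_prop]
lemma Measurable.fin_cons {γ : Type*} [MeasurableSpace γ] {a : γ → α} {b : γ → Fin n → α}
    (ha : Measurable a) (hb : Measurable b) :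
    Measurable fun x => (Fin.cons (a x) (b x) : Fin (n + 1) → α) :=
  measurable_pi_iff.2 fun j => Fin.cases (by simpa) (fun k => by simpa using hb.eval) j

lemma coe_piFinSuccAbove_symm (i : Fin (n + 1)) :
    ⇑(MeasurableEquiv.piFinSuccAbove (fun _ : Fin (n + 1) => α) i).symm =
      fun p => i.insertNth p.1 p.2 := by
  ext p : 1
  simp [MeasurableEquiv.piFinSuccAbove_symm_apply, Fin.insertNthEquiv]

lemma measurable_variance_update (ν : Fin n → Measure α) [∀ i, SFinite (ν i)]
    {f : (Fin n → α) → ℝ} (hf : Measurable f) (i : Fin n) :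
    Measurable fun x => Var[fun t => f (Function.update x i t); ν i] :=
  measurable_variance_prod_left (F := fun p : α × (Fin n → α) => f (Function.update p.2 i p.1))
    (by fun_prop)

lemma measurable_integral_cons (ν : Measure α) [SFinite ν] {f : (Fin (n + 1) → α) → ℝ}
    (hf : Measurable f) : Measurable fun y : Fin n → α => ∫ t, f (Fin.cons t y) ∂ν :=
  Measurable.integral_prod_left' (F := fun p : α × (Fin n → α) => f (Fin.cons p.1 p.2))
    (by fun_prop)

section SigmaFinite

variable (ν : Fin (n + 1) → Measure α) [∀ i, SigmaFinite (ν i)]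

lemma measurePreserving_piFinSuccAbove_symm (i : Fin (n + 1)) :
    MeasurePreserving (MeasurableEquiv.piFinSuccAbove (fun _ : Fin (n + 1) => α) i).symm
      ((ν i).prod (Measure.pi fun j => ν (i.succAbove j))) (Measure.pi ν) :=
  (measurePreserving_piFinSuccAbove ν i).symm _

lemma integral_pi_eq_integral_integral_insertNth (i : Fin (n + 1))
    {Φ : (Fin (n + 1) → α) → ℝ} (hΦ : Integrable Φ (Measure.pi ν)) :
    ∫ x, Φ x ∂Measure.pi ν =
      ∫ y, ∫ t, Φ (i.insertNth t y) ∂ν i ∂Measure.pi fun j => ν (i.succAbove j) := by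
  have h := measurePreserving_piFinSuccAbove_symm ν i
  rw [← h.integral_comp' Φ]
  exact integral_prod_symm _ (h.integrable_comp_of_integrable hΦ)

lemma integral_pi_eq_integral_integral_cons {Φ : (Fin (n + 1) → α) → ℝ}
    (hΦ : Integrable Φ (Measure.pi ν)) :
    ∫ x, Φ x ∂Measure.pi ν = ∫ y, ∫ t, Φ (Fin.cons t y) ∂ν 0 ∂Measure.pi fun j => ν j.succ := by
  simpa [Fin.insertNth_zero'] using integral_pi_eq_integral_integral_insertNth ν 0 hΦ

lemma variance_pi_eq_variance_prod_cons {f : (Fin (n + 1) → α) → ℝ} (hf : Measurable f) :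
    Var[f; Measure.pi ν] =
      Var[fun p => f (Fin.cons p.1 p.2); (ν 0).prod (Measure.pi fun j => ν j.succ)] := by
  have := (measurePreserving_piFinSuccAbove_symm ν 0).variance_fun_comp hf.aemeasurable
  simp only [coe_piFinSuccAbove_symm, Fin.insertNth_zero', Fin.zero_succAbove] at this
  exact this.symm

end SigmaFinite

lemma integral_integral_update (ν : Fin n → Measure α) [∀ i, IsProbabilityMeasure (ν i)]
    {f : (Fin n → α) → ℝ} (hf : Measurable f) (hC : ∀ x, |f x| ≤ C) (i : Fin n) :
    ∫ x, ∫ t, f (Function.update x i t) ∂ν i ∂Measure.pi ν = ∫ x, f x ∂Measure.pi ν := by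
  cases n with
  | zero => exact i.elim0
  | succ n =>
    have hΨ : Integrable (fun x => ∫ t, f (Function.update x i t) ∂ν i) (Measure.pi ν) :=
      integrable_of_abs_le (hf.comp measurable_update').integral_prod_right' fun x =>
        abs_integral_le_of_abs_le fun t => hC _
    rw [integral_pi_eq_integral_integral_insertNth ν i hΨ,
      integral_pi_eq_integral_integral_insertNth ν i (integrable_of_abs_le hf hC)]
    simp [Fin.update_insertNth]

end Pi

section EfronStein

variable {α : Type*} [MeasurableSpace α] {C : ℝ}

section Succ

variable {n : ℕ} (ν : Fin (n + 1) → Measure α) [∀ i, IsProbabilityMeasure (ν i)]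
  {f : (Fin (n + 1) → α) → ℝ}

lemma variance_pi_succ_eq (hf : Measurable f) (hC : ∀ x, |f x| ≤ C) :
    Var[f; Measure.pi ν] = ∫ x, Var[fun t => f (Function.update x 0 t); ν 0] ∂Measure.pi ν
      + Var[fun y => ∫ t, f (Fin.cons t y) ∂ν 0; Measure.pi fun j => ν j.succ] := by
  rw [variance_pi_eq_variance_prod_cons ν hf,
    variance_prod_eq_integral_variance_add_variance_integral (by fun_prop) fun p => hC _,
    integral_pi_eq_integral_integral_cons ν (integrable_of_abs_le
      (measurable_variance_update ν hf 0) fun x => abs_variance_le_of_abs_le (by fun_prop)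
        fun t => hC _)]
  simp [Fin.update_cons_zero]

lemma integral_variance_integral_cons_le (hf : Measurable f) (hC : ∀ x, |f x| ≤ C)
    (j : Fin n) :
    ∫ y, Var[fun s => ∫ t, f (Fin.cons t (Function.update y j s)) ∂ν 0; ν j.succ]
        ∂Measure.pi (fun j => ν j.succ)
      ≤ ∫ x, Var[fun s => f (Function.update x j.succ s); ν j.succ] ∂Measure.pi ν := by
  have hΨ := measurable_variance_update ν hf j.succ
  have hΨC : ∀ x, |Var[fun s => f (Function.update x j.succ s); ν j.succ]| ≤ C ^ 2 := fun x =>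
    abs_variance_le_of_abs_le (by fun_prop) fun t => hC _
  rw [integral_pi_eq_integral_integral_cons ν (integrable_of_abs_le hΨ hΨC)]
  refine integral_mono ?_ ?_ fun y => ?_
  · have hh := measurable_integral_cons (ν 0) hf
    exact integrable_of_abs_le (measurable_variance_update (fun j => ν j.succ) hh j) fun y =>
      abs_variance_le_of_abs_le (hh.comp (measurable_update y)) fun s =>
        abs_integral_le_of_abs_le fun t => hC _
  · exact integrable_of_abs_le
      (Measurable.integral_prod_left' (F := fun p : α × (Fin n → α) => _)
        (hΨ.comp (Measurable.fin_cons measurable_fst measurable_snd)))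
      fun y => abs_integral_le_of_abs_le fun t => hΨC _
  · simp_rw [← Fin.cons_update]
    exact variance_integral_prod_le_integral_variance
      (F := fun p : α × α => f (Fin.cons p.1 (Function.update y j p.2))) (by fun_prop)
      fun p => hC _

end Succ

theorem variance_pi_le_sum_integral_variance_update :
    ∀ {n : ℕ} (ν : Fin n → Measure α) [∀ i, IsProbabilityMeasure (ν i)]
      {f : (Fin n → α) → ℝ}, Measurable f → (∀ x, |f x| ≤ C) →
      Var[f; Measure.pi ν] ≤
        ∑ i, ∫ x, Var[fun t => f (Function.update x i t); ν i] ∂Measure.pi ν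
  | 0, ν, _, f, _, _ => by
    rw [show f = fun _ => f Fin.elim0 from funext fun x => congrArg f (Subsingleton.elim _ _)]
    simp [variance_eq_integral]
  | n + 1, ν, _, f, hf, hC => by
    rw [variance_pi_succ_eq ν hf hC, Fin.sum_univ_succ]
    gcongr
    exact (variance_pi_le_sum_integral_variance_update (fun j => ν j.succ)
      (measurable_integral_cons (ν 0) hf) fun y =>
      abs_integral_le_of_abs_le fun t => hC _).trans
      (Finset.sum_le_sum fun j _ => integral_variance_integral_cons_le ν hf hC j)

end EfronStein

section SelfBounding

variable {α : Type*} {d : ℕ} {g : (Fin d → α) → ℝ} {g' : Fin d → (Fin d → α) → ℝ}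

lemma le_update_add_one (hdep : ∀ i x y, (∀ j, j ≠ i → x j = y j) → g' i x = g' i y)
    (hsb1 : ∀ i x, 0 ≤ g x - g' i x ∧ g x - g' i x ≤ 1) (x : Fin d → α) (i : Fin d) (t : α) :
    g x ≤ g (Function.update x i t) + 1 := by
  have := hdep i x (Function.update x i t) fun j hj => (Function.update_of_ne hj _ _).symm
  linarith [(hsb1 i x).2, (hsb1 i (Function.update x i t)).1]

lemma le_piecewise_add_card (hdep : ∀ i x y, (∀ j, j ≠ i → x j = y j) → g' i x = g' i y)
    (hsb1 : ∀ i x, 0 ≤ g x - g' i x ∧ g x - g' i x ≤ 1) (x z : Fin d → α)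
    (s : Finset (Fin d)) : g x ≤ g (s.piecewise z x) + s.card := by
  induction s using Finset.induction_on with
  | empty => simp
  | insert i s hi ih =>
    rw [Finset.piecewise_insert, Finset.card_insert_of_notMem hi, Nat.cast_succ]
    linarith [le_update_add_one hdep hsb1 (s.piecewise z x) i (z i)]

lemma le_add_card (hdep : ∀ i x y, (∀ j, j ≠ i → x j = y j) → g' i x = g' i y)
    (hsb1 : ∀ i x, 0 ≤ g x - g' i x ∧ g x - g' i x ≤ 1) (x z : Fin d → α) : g x ≤ g z + d := by
  simpa using le_piecewise_add_card hdep hsb1 x z Finset.univ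

lemma exists_abs_le_of_selfBounding
    (hdep : ∀ i x y, (∀ j, j ≠ i → x j = y j) → g' i x = g' i y)
    (hsb1 : ∀ i x, 0 ≤ g x - g' i x ∧ g x - g' i x ≤ 1) : ∃ C, ∀ x, |g x| ≤ C := by
  rcases isEmpty_or_nonempty (Fin d → α) with hα | ⟨⟨z⟩⟩
  · exact ⟨0, fun x => isEmptyElim x⟩
  exact ⟨|g z| + d, fun x => abs_le.mpr
    ⟨by linarith [le_add_card hdep hsb1 z x, neg_abs_le (g z)],
      by linarith [le_add_card hdep hsb1 x z, le_abs_self (g z)]⟩⟩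

variable [MeasurableSpace α]

lemma variance_update_le_integral_sub (hg : Measurable g)
    (hdep : ∀ i x y, (∀ j, j ≠ i → x j = y j) → g' i x = g' i y)
    (hsb1 : ∀ i x, 0 ≤ g x - g' i x ∧ g x - g' i x ≤ 1) (ν : Measure α) [IsProbabilityMeasure ν]
    (x : Fin d → α) (i : Fin d) :
    Var[fun t => g (Function.update x i t); ν] ≤ ∫ t, g (Function.update x i t) ∂ν - g' i x := by
  have hmem : ∀ t, g (Function.update x i t) ∈ Set.Icc (g' i x) (g' i x + 1) := fun t => by
    rw [hdep i x (Function.update x i t) fun j hj => (Function.update_of_ne hj _ _).symm]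
    constructor <;> linarith [hsb1 i (Function.update x i t)]
  have := variance_le_sub_mul_sub (ae_of_all ν hmem) (hg.comp (measurable_update x)).aemeasurable
  nlinarith [sq_nonneg (∫ t, g (Function.update x i t) ∂ν - g' i x)]

lemma sum_variance_update_le (hg : Measurable g)
    (hdep : ∀ i x y, (∀ j, j ≠ i → x j = y j) → g' i x = g' i y)
    (hsb1 : ∀ i x, 0 ≤ g x - g' i x ∧ g x - g' i x ≤ 1) (hsb2 : ∀ x, ∑ i, (g x - g' i x) ≤ g x)
    (ν : Fin d → Measure α) [∀ i, IsProbabilityMeasure (ν i)] (x : Fin d → α) :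
    ∑ i, Var[fun t => g (Function.update x i t); ν i] ≤
      ∑ i, (∫ t, g (Function.update x i t) ∂ν i - g x) + g x := by
  have hsplit : ∑ i, (∫ t, g (Function.update x i t) ∂ν i - g' i x) =
      ∑ i, (∫ t, g (Function.update x i t) ∂ν i - g x) + ∑ i, (g x - g' i x) := by
    rw [← Finset.sum_add_distrib]; simp
  linarith [hsb2 x, Finset.sum_le_sum fun i (_ : i ∈ Finset.univ) =>
    variance_update_le_integral_sub hg hdep hsb1 (ν i) x i]

theorem variance_pi_le_integral_of_selfBounding (hg : Measurable g)
    (hdep : ∀ i x y, (∀ j, j ≠ i → x j = y j) → g' i x = g' i y)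
    (hsb1 : ∀ i x, 0 ≤ g x - g' i x ∧ g x - g' i x ≤ 1) (hsb2 : ∀ x, ∑ i, (g x - g' i x) ≤ g x)
    (ν : Fin d → Measure α) [∀ i, IsProbabilityMeasure (ν i)] {C : ℝ} (hC : ∀ x, |g x| ≤ C) :
    Var[g; Measure.pi ν] ≤ ∫ x, g x ∂Measure.pi ν := by
  set A : Fin d → (Fin d → α) → ℝ := fun i x => ∫ t, g (Function.update x i t) ∂ν i
  have hA : ∀ i, Integrable (A i) (Measure.pi ν) := fun i =>
    integrable_of_abs_le (hg.comp measurable_update').integral_prod_right' fun x =>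
      abs_integral_le_of_abs_le fun t => hC _
  have hV : ∀ i, Integrable (fun x => Var[fun t => g (Function.update x i t); ν i])
      (Measure.pi ν) := fun i =>
    integrable_of_abs_le (measurable_variance_update ν hg i) fun x =>
      abs_variance_le_of_abs_le (hg.comp (measurable_update x)) fun t => hC _
  have hg_int : Integrable g (Measure.pi ν) := integrable_of_abs_le hg hC
  have hAg : ∀ i ∈ Finset.univ, Integrable (fun x => A i x - g x) (Measure.pi ν) := fun i _ =>
    (hA i).sub hg_int
  calc Var[g; Measure.pi ν]
      ≤ ∑ i, ∫ x, Var[fun t => g (Function.update x i t); ν i] ∂Measure.pi ν :=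
        variance_pi_le_sum_integral_variance_update ν hg hC
    _ = ∫ x, ∑ i, Var[fun t => g (Function.update x i t); ν i] ∂Measure.pi ν :=
        (integral_finsetSum _ fun i _ => hV i).symm
    _ ≤ ∫ x, (∑ i, (A i x - g x) + g x) ∂Measure.pi ν :=
        integral_mono (integrable_finsetSum _ fun i _ => hV i)
          ((integrable_finsetSum _ hAg).add hg_int)
          (sum_variance_update_le hg hdep hsb1 hsb2 ν)
    _ = ∫ x, g x ∂Measure.pi ν := by
        rw [integral_add (integrable_finsetSum _ hAg) hg_int, integral_finsetSum _ hAg]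
        simp [integral_sub (hA _) hg_int, A, integral_integral_update ν hg hC]

end SelfBounding

/-- If `g : X^d → ℝ` is a measurable self-bounding function and `X_1, …, X_d` are
independent random variables with values in `X`, then `Z = g(X_1, …, X_d)` satisfies
`Var(Z) ≤ E[Z]`. -/
theorem stmt11 {α Ω : Type*} [MeasurableSpace α] [MeasurableSpace Ω]
    (μ : Measure Ω) [IsProbabilityMeasure μ]
    (d : ℕ) (g : (Fin d → α) → ℝ) (hgmeas : Measurable g)
    (hnonneg : ∀ x, 0 ≤ g x)
    (g' : Fin d → (Fin d → α) → ℝ)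
    (hdep : ∀ i x y, (∀ j, j ≠ i → x j = y j) → g' i x = g' i y)
    (hsb1 : ∀ i x, 0 ≤ g x - g' i x ∧ g x - g' i x ≤ 1)
    (hsb2 : ∀ x, (∑ i, (g x - g' i x)) ≤ g x)
    (X : Fin d → Ω → α) (hXmeas : ∀ i, Measurable (X i))
    (hindep : ProbabilityTheory.iIndepFun X μ) :
    ProbabilityTheory.evariance (fun ω => g (fun i => X i ω)) μ ≤
      ∫⁻ ω, ENNReal.ofReal (g (fun i => X i ω)) ∂μ := by
  obtain ⟨C, hC⟩ := exists_abs_le_of_selfBounding hdep hsb1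
  have hX : Measurable fun ω i => X i ω := measurable_pi_lambda _ hXmeas
  have hZ : Measurable fun ω => g (fun i => X i ω) := hgmeas.comp hX
  have : ∀ i, IsProbabilityMeasure (μ.map (X i)) := fun i =>
    Measure.isProbabilityMeasure_map (hXmeas i).aemeasurable
  have hvar : Var[fun ω => g (fun i => X i ω); μ] ≤ ∫ ω, g (fun i => X i ω) ∂μ := by
    have := variance_pi_le_integral_of_selfBounding hgmeas hdep hsb1 hsb2
      (fun i => μ.map (X i)) hC
    rwa [← hindep.map_fun_eq_pi_map fun i => (hXmeas i).aemeasurable,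
      variance_map hgmeas.aemeasurable hX.aemeasurable,
      integral_map hX.aemeasurable hgmeas.aestronglyMeasurable] at this
  rw [← ofReal_variance (memLp_of_abs_le 2 hZ fun ω => hC _),
    ← ofReal_integral_eq_lintegral_ofReal (integrable_of_abs_le hZ fun ω => hC _)
      (ae_of_all _ fun ω => hnonneg _)]
  exact ENNReal.ofReal_le_ofReal hvar
end

section
/- Let B(k, 1/2) denote a binomial random variable with k trials and success probability 1/2. Then for every real t' with 0 ≤ t' ≤ k/8, Pr(B(k,1/2) ≥ k/2 + t') ≥ (1/15)·exp(−16 t'^2 / k). -/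
/-!
Write `m = ⌈k/2 + t'⌉`, so the tail is `∑_{m ≤ j ≤ k} C(k, j)`.

For `k ≥ 64` keep only the block of `s = ⌈√k/3⌉` terms `m ≤ j < m + s`; past the centre
`C(k, j)` decreases, so the block is at least `s · C(k, m + s - 1)`. Walking up from the
central coefficient `C(k, ⌈k/2⌉) ≥ 2^k / (2√k)`, each ratio `C(k, j+1) / C(k, j) = (k - j)/(j + 1)`
is at least `exp(-(2j + 1 - k)/(k - j))`, so
`C(k, ⌈k/2⌉ + i) ≥ C(k, ⌈k/2⌉) · exp(-2i(i+1)/(k+1-2i))`.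
For the block end `i < t' + √k/3 + 1`, and this exponent exceeds `16t'²/k` by at most `9/10`;
as `exp(9/10) ≤ 5/2`, the block carries at least `2^k · exp(-16t'²/k) / 15`.

For `k < 64` use `exp(-16t'²/k) ≤ k/(k + 4e²)` with `e = 2m - 2 - k ≤ 2t'`, and check the
resulting inequality between natural numbers for all `k < 64` and all admissible `m`.
-/

open Real Finset

theorem exp_neg_le_inv_one_add {x : ℝ} (hx : -1 < x) : exp (-x) ≤ (1 + x)⁻¹ := by
  rw [exp_neg]
  exact inv_anti₀ (by linarith) (by linarith [add_one_le_exp x])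

theorem exp_nine_tenths_le : exp (9 / 10) ≤ 5 / 2 := by
  have h : exp (9 / 10) * exp (1 / 10) = exp 1 := by rw [← exp_add]; norm_num
  nlinarith [exp_one_lt_d9, add_one_le_exp (1 / 10 : ℝ), exp_pos (9 / 10)]

theorem choose_le_choose_of_half_le {n a b : ℕ} (ha : n ≤ 2 * a) (hab : a ≤ b) :
    n.choose b ≤ n.choose a := by
  induction b, hab using Nat.le_induction with
  | base => exact le_rfl
  | succ b hab ih =>
    refine le_trans ?_ ih
    rcases le_or_gt n b with hnb | hbn
    · simp [Nat.choose_eq_zero_of_lt (Nat.lt_succ_of_le hnb)]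
    · refine Nat.le_of_mul_le_mul_right ?_ (Nat.succ_pos b)
      rw [Nat.choose_succ_right_eq]
      exact Nat.mul_le_mul_left _ (by omega)

theorem card_mul_choose_le_sum_Icc {n m s : ℕ} (hm : n ≤ 2 * m) (hs : m + s ≤ n + 1) :
    s * n.choose (m + s - 1) ≤ ∑ j ∈ Icc m n, n.choose j := by
  calc s * n.choose (m + s - 1) = ∑ _j ∈ Ico m (m + s), n.choose (m + s - 1) := by simp
    _ ≤ ∑ j ∈ Ico m (m + s), n.choose j :=
      sum_le_sum fun j hj => by
        simp only [mem_Ico] at hj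
        exact choose_le_choose_of_half_le (by omega) (by omega)
    _ ≤ ∑ j ∈ Icc m n, n.choose j :=
      sum_le_sum_of_subset fun j hj => by simp only [mem_Ico, mem_Icc] at hj ⊢; omega

theorem filter_range_le_cast_eq_Icc_ceil (n : ℕ) (x : ℝ) :
    (range (n + 1)).filter (fun j : ℕ => x ≤ j) = Icc ⌈x⌉₊ n := by
  ext j
  simp [Nat.ceil_le, and_comm]

theorem choose_mul_exp_le_choose_succ {n j : ℕ} (h : j < n) :
    (n.choose j : ℝ) * exp (-((2 * j + 1 - n) / (n - j) : ℝ)) ≤ n.choose (j + 1) := by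
  have hnj : (0 : ℝ) < n - j := by
    have : (j : ℝ) < n := by exact_mod_cast h
    linarith
  have h1x : 1 + (2 * j + 1 - n) / (n - j) = (j + 1 : ℝ) / (n - j) := by
    field_simp; ring
  have hsucc : (n.choose (j + 1) : ℝ) = n.choose j * ((n - j) / (j + 1)) := by
    have := congrArg (Nat.cast : ℕ → ℝ) (Nat.choose_succ_right_eq n j)
    push_cast [Nat.cast_sub h.le] at this
    field_simp
    linear_combination this
  rw [hsucc]
  gcongr
  calc exp (-((2 * j + 1 - n) / (n - j) : ℝ)) ≤ (1 + (2 * j + 1 - n) / (n - j) : ℝ)⁻¹ :=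
        exp_neg_le_inv_one_add (by linarith [h1x, div_pos (by positivity : (0:ℝ) < j + 1) hnj])
    _ = (n - j) / (j + 1) := by rw [h1x, inv_div]

theorem choose_half_mul_exp_le_choose_half_add {n i : ℕ} (h : 2 * i ≤ n) :
    (n.choose ((n + 1) / 2) : ℝ) * exp (-(2 * i * (i + 1) / (n + 1 - 2 * i) : ℝ)) ≤
      n.choose ((n + 1) / 2 + i) := by
  set c := (n + 1) / 2
  set D : ℝ := n + 1 - 2 * i
  have hD : 0 < D := by
    have : (2 * i : ℝ) ≤ n := by exact_mod_cast h
    linarith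
  suffices ∀ a ≤ i, (n.choose c : ℝ) * exp (-(2 * a * (a + 1) / D)) ≤ n.choose (c + a) from
    this i le_rfl
  intro a ha
  induction a with
  | zero => simp
  | succ a ih =>
    have hcn : c + a < n := by omega
    have hc1 : (n : ℝ) ≤ 2 * c := by exact_mod_cast (by omega : n ≤ 2 * c)
    have hc2 : (2 * c : ℝ) ≤ n + 1 := by exact_mod_cast (by omega : 2 * c ≤ n + 1)
    have hai : (a : ℝ) + 1 ≤ i := by exact_mod_cast ha
    have hnum : (2 * (c + a : ℕ) + 1 - n : ℝ) ≤ 2 * a + 2 := by push_cast; linarith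
    have hden : D ≤ 2 * (n - (c + a : ℕ) : ℝ) := by push_cast; linarith
    have hx : (2 * (c + a : ℕ) + 1 - n) / (n - (c + a : ℕ)) ≤ (4 * a + 4 : ℝ) / D := by
      rw [div_le_div_iff₀ (by linarith) hD]
      nlinarith
    calc (n.choose c : ℝ) * exp (-(2 * (a + 1 : ℕ) * ((a + 1 : ℕ) + 1) / D))
        = n.choose c * exp (-(2 * a * (a + 1) / D)) * exp (-((4 * a + 4) / D)) := by
          rw [mul_assoc (n.choose c : ℝ), ← exp_add]; congr 2; push_cast; field_simp; ring
      _ ≤ n.choose (c + a) * exp (-((2 * (c + a : ℕ) + 1 - n) / (n - (c + a : ℕ)))) := by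
          gcongr
          exact ih (by omega)
      _ ≤ n.choose (c + (a + 1)) := choose_mul_exp_le_choose_succ hcn

theorem sixteen_pow_le_four_mul_mul_centralBinom_sq {n : ℕ} (hn : 1 ≤ n) :
    16 ^ n ≤ 4 * n * n.centralBinom ^ 2 := by
  induction n, hn using Nat.le_induction with
  | base => decide
  | succ n hn ih =>
    have hrec := Nat.succ_mul_centralBinom_succ n
    refine Nat.le_of_mul_le_mul_left ?_ (Nat.succ_pos n)
    calc (n + 1) * 16 ^ (n + 1) = 16 * (n + 1) * 16 ^ n := by ring
      _ ≤ 16 * (n + 1) * (4 * n * n.centralBinom ^ 2) := by gcongr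
      _ ≤ 4 * (2 * (2 * n + 1) * n.centralBinom) ^ 2 := by
        have : 4 * n * (n + 1) ≤ (2 * n + 1) ^ 2 := by nlinarith
        nlinarith
      _ = (n + 1) * (4 * (n + 1) * (n + 1).centralBinom ^ 2) := by rw [← hrec]; ring

theorem four_pow_le_four_mul_mul_choose_half_sq {n : ℕ} (hn : 1 ≤ n) :
    4 ^ n ≤ 4 * n * n.choose ((n + 1) / 2) ^ 2 := by
  obtain ⟨p, rfl | rfl⟩ := Nat.even_or_odd' n
  · have hp : 1 ≤ p := by omega
    rw [show (2 * p + 1) / 2 = p by omega, ← Nat.centralBinom_eq_two_mul_choose, pow_mul]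
    calc (4 ^ 2) ^ p ≤ 4 * p * p.centralBinom ^ 2 :=
        sixteen_pow_le_four_mul_mul_centralBinom_sq hp
      _ ≤ 4 * (2 * p) * p.centralBinom ^ 2 := by gcongr; omega
  · have hsucc : (p + 1).centralBinom = 2 * (2 * p + 1).choose (p + 1) := by
      rw [Nat.centralBinom_eq_two_mul_choose, show 2 * (p + 1) = 2 * p + 1 + 1 by ring,
        Nat.choose_succ_succ, ← Nat.choose_symm_half]
      ring
    rw [show (2 * p + 1 + 1) / 2 = p + 1 by omega]
    have h := sixteen_pow_le_four_mul_mul_centralBinom_sq (Nat.le_add_left 1 p)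
    rw [hsucc] at h
    calc 4 ^ (2 * p + 1) ≤ 4 * (p + 1) * (2 * p + 1).choose (p + 1) ^ 2 := by
          rw [pow_succ, pow_mul]
          ring_nf at h ⊢
          linarith
      _ ≤ 4 * (2 * p + 1) * (2 * p + 1).choose (p + 1) ^ 2 := by gcongr; omega

theorem two_pow_le_two_mul_sqrt_mul_choose_half {n : ℕ} (hn : 1 ≤ n) :
    (2 : ℝ) ^ n ≤ 2 * √n * n.choose ((n + 1) / 2) := by
  have h : ((4 ^ n : ℕ) : ℝ) ≤ ((4 * n * n.choose ((n + 1) / 2) ^ 2 : ℕ) : ℝ) := by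
    exact_mod_cast four_pow_le_four_mul_mul_choose_half_sq hn
  refine (pow_le_pow_iff_left₀ (by positivity) (by positivity) two_ne_zero).mp ?_
  rw [mul_pow, mul_pow, sq_sqrt (Nat.cast_nonneg n), ← pow_mul, mul_comm n 2, pow_mul]
  push_cast at h
  linarith

theorem block_exponent_le {k : ℕ} {t i : ℝ} (hk : 64 ≤ k) (ht0 : 0 ≤ t) (ht : t ≤ k / 8)
    (hi0 : 0 ≤ i) (hi : i < t + √k / 3 + 1) :
    2 * i * (i + 1) / (k + 1 - 2 * i) ≤ 16 * t ^ 2 / k + 9 / 10 := by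
  set w := √k
  have hw2 : w ^ 2 = k := sq_sqrt (Nat.cast_nonneg k)
  have hw : 8 ≤ w := by
    have : (64 : ℝ) ≤ k := by exact_mod_cast hk
    nlinarith [sqrt_nonneg (k : ℝ)]
  rw [← hw2] at ht ⊢
  have hD0 : 0 < w ^ 2 - 1 - 2 * t - 2 * w / 3 := by nlinarith
  have key : 2 * (t + w / 3 + 1) * (t + w / 3 + 2) * w ^ 2 ≤
      (16 * t ^ 2 + 9 / 10 * w ^ 2) * (w ^ 2 - 1 - 2 * t - 2 * w / 3) := by
    nlinarith [mul_nonneg ht0 (by linarith : (0 : ℝ) ≤ w ^ 2 - 8 * t),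
      mul_nonneg (mul_nonneg ht0 ht0) (by linarith : (0 : ℝ) ≤ w ^ 2 - 8 * t),
      mul_nonneg (mul_nonneg ht0 ht0) (by linarith : (0 : ℝ) ≤ w - 8),
      mul_nonneg (mul_nonneg (by linarith : (0 : ℝ) ≤ w - 8) (by linarith : (0 : ℝ) ≤ w))
        (by linarith : (0 : ℝ) ≤ w),
      mul_nonneg ht0 (by linarith : (0 : ℝ) ≤ w)]
  rw [div_le_iff₀ (by linarith)]
  calc 2 * i * (i + 1) ≤ 2 * (t + w / 3 + 1) * (t + w / 3 + 2) := by nlinarith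
    _ ≤ (16 * t ^ 2 / w ^ 2 + 9 / 10) * (w ^ 2 - 1 - 2 * t - 2 * w / 3) := by
      rw [div_add' _ _ _ (by positivity), div_mul_eq_mul_div, le_div_iff₀ (by positivity)]
      linarith
    _ ≤ (16 * t ^ 2 / w ^ 2 + 9 / 10) * (w ^ 2 + 1 - 2 * i) :=
      mul_le_mul_of_nonneg_left (by linarith) (by positivity)

theorem exp_neg_div_fifteen_le_exp_neg_div_six {a E : ℝ} (h : E ≤ a + 9 / 10) :
    exp (-a) / 15 ≤ exp (-E) / 6 := by
  have : exp (-a) ≤ exp (-E) * exp (9 / 10) := by rw [← exp_add]; gcongr; linarith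
  nlinarith [exp_nine_tenths_le, exp_pos (-E)]

theorem sum_Icc_choose_ge_of_sixty_four_le {k m : ℕ} {t : ℝ} (hk : 64 ≤ k) (ht0 : 0 ≤ t)
    (ht : t ≤ k / 8) (hm : k / 2 + t ≤ m) (hm' : m < k / 2 + t + 1) :
    1 / 15 * exp (-(16 * t ^ 2) / k) * 2 ^ k ≤ ∑ j ∈ Icc m k, (k.choose j : ℝ) := by
  set w := √k
  have hw2 : w ^ 2 = k := sq_sqrt (Nat.cast_nonneg k)
  have hw : 8 ≤ w := by
    have : (64 : ℝ) ≤ k := by exact_mod_cast hk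
    nlinarith [sqrt_nonneg (k : ℝ)]
  set s := ⌈w / 3⌉₊
  have hs : w / 3 ≤ s := Nat.le_ceil _
  have hs' : (s : ℝ) < w / 3 + 1 := Nat.ceil_lt_add_one (by positivity)
  set c := (k + 1) / 2
  have hkm : k ≤ 2 * m := by exact_mod_cast (by linarith : (k : ℝ) ≤ 2 * m)
  have hc : (k : ℝ) ≤ 2 * c := by exact_mod_cast (by omega : k ≤ 2 * c)
  have hs1 : 1 ≤ s := by exact_mod_cast (by linarith : (1 : ℝ) ≤ s)
  set i := m + s - 1 - c
  have hi : (i : ℝ) < t + w / 3 + 1 := by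
    have : ((i + c + 1 : ℕ) : ℝ) = m + s := by exact_mod_cast (by omega : i + c + 1 = m + s)
    push_cast at this
    linarith
  have hwk : w ≤ k / 8 := by nlinarith
  have h2i : 2 * i ≤ k := by exact_mod_cast (by linarith : (2 * i : ℝ) ≤ k)
  have hms : m + s ≤ k + 1 := by exact_mod_cast (by linarith : (m + s : ℝ) ≤ k + 1)
  set E : ℝ := 2 * i * (i + 1) / (k + 1 - 2 * i)
  have hE : E ≤ 16 * t ^ 2 / k + 9 / 10 := block_exponent_le hk ht0 ht (Nat.cast_nonneg i) hi
  have hcentral : (2 : ℝ) ^ k / (2 * w) ≤ k.choose c := by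
    rw [div_le_iff₀ (by positivity), mul_comm]
    exact two_pow_le_two_mul_sqrt_mul_choose_half (by omega)
  have hblock : (s * k.choose (m + s - 1) : ℝ) ≤ ∑ j ∈ Icc m k, (k.choose j : ℝ) := by
    exact_mod_cast card_mul_choose_le_sum_Icc hkm hms
  rw [show m + s - 1 = c + i by omega] at hblock
  calc 1 / 15 * exp (-(16 * t ^ 2) / k) * 2 ^ k ≤ exp (-E) / 6 * 2 ^ k := by
        rw [one_div_mul_eq_div, neg_div]
        exact mul_le_mul_of_nonneg_right (exp_neg_div_fifteen_le_exp_neg_div_six hE)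
          (by positivity)
    _ = w / 3 * (2 ^ k / (2 * w)) * exp (-E) := by field_simp; ring
    _ ≤ s * (k.choose c * exp (-E)) := by rw [← mul_assoc]; gcongr
    _ ≤ s * k.choose (c + i) := by gcongr; exact choose_half_mul_exp_le_choose_half_add h2i
    _ ≤ ∑ j ∈ Icc m k, (k.choose j : ℝ) := hblock

theorem nat_tail_bound_of_lt_sixty_four :
    ∀ k ∈ Ioo 0 64, ∀ m ∈ Icc ((k + 1) / 2) ((5 * k + 7) / 8),
      k * 2 ^ k ≤ 15 * (∑ j ∈ Icc m k, k.choose j) * (k + 4 * (2 * m - 2 - k) ^ 2) := by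
  decide +kernel

theorem sum_Icc_choose_ge_of_lt_sixty_four {k m : ℕ} {t : ℝ} (hk0 : 0 < k) (hk : k < 64)
    (ht0 : 0 ≤ t) (ht : t ≤ k / 8) (hm : k / 2 + t ≤ m) (hm' : m < k / 2 + t + 1) :
    1 / 15 * exp (-(16 * t ^ 2) / k) * 2 ^ k ≤ ∑ j ∈ Icc m k, (k.choose j : ℝ) := by
  have hk0' : (0 : ℝ) < k := by exact_mod_cast hk0
  have hkm : k ≤ 2 * m := by exact_mod_cast (by linarith : (k : ℝ) ≤ 2 * m)
  have hmk : 8 * m < 5 * k + 8 := by exact_mod_cast (by linarith : (8 * m : ℝ) < 5 * k + 8)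
  set e := 2 * m - 2 - k
  have he0 : (0 : ℝ) ≤ e := Nat.cast_nonneg e
  have he : (e : ℝ) ≤ 2 * t := by
    rcases Nat.eq_zero_or_pos e with he | he
    · rw [he, Nat.cast_zero]; linarith
    · have : ((e + 2 + k : ℕ) : ℝ) = 2 * m := by exact_mod_cast (by omega : e + 2 + k = 2 * m)
      push_cast at this
      linarith
  have hcheck : (k * 2 ^ k : ℝ) ≤ 15 * (∑ j ∈ Icc m k, (k.choose j : ℝ)) * (k + 4 * e ^ 2) := by
    exact_mod_cast nat_tail_bound_of_lt_sixty_four k (mem_Ioo.mpr ⟨hk0, hk⟩) m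
      (mem_Icc.mpr ⟨by omega, by omega⟩)
  have hy : 0 ≤ 4 * (e : ℝ) ^ 2 / k := by positivity
  have hexp : exp (-(16 * t ^ 2) / k) ≤ k / (k + 4 * e ^ 2) := by
    calc exp (-(16 * t ^ 2) / k) ≤ exp (-(4 * e ^ 2 / k)) := by
          rw [neg_div]
          exact exp_le_exp.mpr (neg_le_neg (div_le_div_of_nonneg_right (by nlinarith) hk0'.le))
      _ ≤ (1 + 4 * e ^ 2 / k : ℝ)⁻¹ := exp_neg_le_inv_one_add (by linarith)
      _ = k / (k + 4 * e ^ 2) := by field_simp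
  calc 1 / 15 * exp (-(16 * t ^ 2) / k) * 2 ^ k ≤ 1 / 15 * (k / (k + 4 * e ^ 2)) * 2 ^ k := by
        gcongr
    _ = k * 2 ^ k / (15 * (k + 4 * e ^ 2)) := by field_simp
    _ ≤ ∑ j ∈ Icc m k, (k.choose j : ℝ) := by
        rw [div_le_iff₀ (by positivity)]
        linarith

/-- Lower bound on the binomial upper tail: for `B(k, 1/2)` a binomial random
variable with `k` trials and success probability `1/2`, and `0 ≤ t' ≤ k/8`,
`Pr(B(k,1/2) ≥ k/2 + t') ≥ (1/15)·exp(-16 t'² / k)`. -/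
theorem stmt18 (k : ℕ) (hk : 0 < k) (t' : ℝ) (h0 : 0 ≤ t') (h1 : t' ≤ (k : ℝ) / 8) :
    (1 / 15) * Real.exp (-(16 * t' ^ 2) / k) ≤
      (∑ j ∈ (Finset.range (k + 1)).filter (fun j : ℕ => (k : ℝ) / 2 + t' ≤ (j : ℝ)),
        (k.choose j : ℝ)) / 2 ^ k := by
  rw [filter_range_le_cast_eq_Icc_ceil, le_div_iff₀ (by positivity)]
  have hm := Nat.le_ceil ((k : ℝ) / 2 + t')
  have hm' := Nat.ceil_lt_add_one (by positivity : 0 ≤ (k : ℝ) / 2 + t')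
  rcases lt_or_ge k 64 with hsmall | hlarge
  · exact sum_Icc_choose_ge_of_lt_sixty_four hk hsmall h0 h1 hm hm'
  · exact sum_Icc_choose_ge_of_sixty_four_le hlarge h0 h1 hm hm'
end
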